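/- In the whole-page model of Algorithm 1, it is an invariant of every reachable state (from an initially consistent state where cache = disk = NVM and dirty = false) that: if dirty = false then the device named by latest_dev holds a version equal to the current cache version; and in all states the device named by latest_dev holds a version ≥ every version that was both written and subsequently synced or written back. -/

import Mathlib

/- Whole-page model of Algorithm 1: single page with version numbers,
   state = (cache, disk, nvm, dirty, latest_dev). -/

inductive Dev | disk | nvm
deriving DecidableEq

inductive Event
  | write (v : ℕ)   -- write a fresh version v to the cache
  | sync
  | writeback
  | crash
  | read
deriving DecidableEq

structure St where
  cache : ℕ
  disk  : ℕ
  nvm   : ℕ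
  dirty : Bool
  dev   : Dev

/-- The version held by the device named by `latest_dev`. -/
def deviceVal (s : St) : ℕ :=
  match s.dev with
  | .disk => s.disk
  | .nvm  => s.nvm

/-- Algorithm 1 transitions.  A crash erases the cache and recovery restores
    it from the device indicated by `latest_dev`. -/
def step (s : St) : Event → St
  | .write v   => { s with cache := v, dirty := true }
  | .writeback => { s with disk := s.cache, dirty := false, dev := .disk }
  | .sync      => if s.dirty then { s with nvm := s.cache, dirty := false, dev := .nvm } else s
  | .crash     => { s with cache := deviceVal s }
  | .read      => s

def run (s : St) (tr : List Event) : St := tr.foldl step s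

/-! The inductive invariant is `deviceVal s ≤ s.cache`, with equality when the cache is clean: a
fresh write lifts the cache above the device, while a sync or writeback copies the cache to the
device. Along such steps the cache and the device version only grow, so a version `v` that was
written and later persisted is at most the cache at the moment of persistence, hence at most the
device version from then on. -/

@[simp] theorem run_nil (s : St) : run s [] = s := rfl

@[simp] theorem run_cons (s : St) (e : Event) (tr : List Event) :
    run s (e :: tr) = run (step s e) tr := rfl

@[simp] theorem run_append (s : St) (a b : List Event) :
    run s (a ++ b) = run (run s a) b :=
  List.foldl_append ..

-- Crashes are excluded: recovery may move the cache back to an older version.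
def Admissible (s : St) : Event → Prop
  | .write u => s.cache < u
  | .sync => True
  | .writeback => True
  | _ => False

def AdmissibleRun : St → List Event → Prop
  | _, [] => True
  | s, e :: tr => Admissible s e ∧ AdmissibleRun (step s e) tr

@[simp] theorem admissibleRun_nil (s : St) : AdmissibleRun s [] := trivial

@[simp] theorem admissibleRun_cons (s : St) (e : Event) (tr : List Event) :
    AdmissibleRun s (e :: tr) ↔ Admissible s e ∧ AdmissibleRun (step s e) tr :=
  Iff.rfl

@[simp] theorem admissibleRun_append (s : St) (a b : List Event) :
    AdmissibleRun s (a ++ b) ↔ AdmissibleRun s a ∧ AdmissibleRun (run s a) b := by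
  induction a generalizing s with
  | nil => simp
  | cons e a ih => simp [ih, and_assoc]

theorem admissibleRun_of_fresh {s : St} {tr : List Event}
    (hops : ∀ e ∈ tr, (∃ u, e = Event.write u) ∨ e = Event.sync ∨ e = Event.writeback)
    (hfresh : ∀ t₁ u t₂, tr = t₁ ++ [Event.write u] ++ t₂ → (run s t₁).cache < u) :
    AdmissibleRun s tr := by
  induction tr generalizing s with
  | nil => trivial
  | cons e tr ih =>
    refine ⟨?_, ih (fun e' he' => hops e' (List.mem_cons_of_mem e he'))
      fun t₁ u t₂ h => hfresh (e :: t₁) u t₂ (by simp [h])⟩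
    rcases hops e List.mem_cons_self with ⟨u, rfl⟩ | rfl | rfl
    · exact hfresh [] u tr rfl
    all_goals trivial

def Consistent (s : St) : Prop :=
  deviceVal s ≤ s.cache ∧ (s.dirty = false → deviceVal s = s.cache)

theorem Consistent.step {s : St} {e : Event} (hs : Consistent s) (he : Admissible s e) :
    Consistent (step s e) := by
  cases e with
  | write u =>
    exact ⟨(hs.1.trans_lt he).le, by simp [_root_.step]⟩
  | sync =>
    by_cases hd : s.dirty
    · simp [_root_.step, hd, Consistent, deviceVal]
    · rwa [_root_.step, if_neg hd]
  | writeback => simp [_root_.step, Consistent, deviceVal]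
  | crash | read => exact he.elim

theorem Consistent.run {s : St} {tr : List Event} (hs : Consistent s)
    (htr : AdmissibleRun s tr) : Consistent (run s tr) := by
  induction tr generalizing s with
  | nil => exact hs
  | cons e tr ih => exact ih (hs.step htr.1) htr.2

theorem cache_le_cache_step {s : St} {e : Event} (he : Admissible s e) :
    s.cache ≤ (step s e).cache := by
  cases e with
  | write u => exact he.le
  | sync => by_cases hd : s.dirty <;> simp [step, hd]
  | writeback => simp [step]
  | crash | read => exact he.elim

theorem cache_le_cache_run {s : St} {tr : List Event} (htr : AdmissibleRun s tr) :
    s.cache ≤ (run s tr).cache := by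
  induction tr generalizing s with
  | nil => exact le_rfl
  | cons e tr ih => exact (cache_le_cache_step htr.1).trans (ih htr.2)

theorem deviceVal_le_deviceVal_step {s : St} (hs : deviceVal s ≤ s.cache) (e : Event) :
    deviceVal s ≤ deviceVal (step s e) := by
  cases e with
  | sync =>
    unfold step
    split_ifs
    exacts [hs, le_rfl]
  | writeback => exact hs
  | write | crash | read => simp [step, deviceVal]

theorem deviceVal_le_deviceVal_run {s : St} {tr : List Event} (hs : Consistent s)
    (htr : AdmissibleRun s tr) : deviceVal s ≤ deviceVal (run s tr) := by
  induction tr generalizing s with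
  | nil => exact le_rfl
  | cons e tr ih => exact (deviceVal_le_deviceVal_step hs.1 e).trans (ih (hs.step htr.1) htr.2)

theorem cache_le_deviceVal_step {s : St} {e : Event} (hs : Consistent s)
    (he : e = Event.sync ∨ e = Event.writeback) : s.cache ≤ deviceVal (step s e) := by
  rcases he with rfl | rfl
  · by_cases hd : s.dirty
    · simp [step, hd, deviceVal]
    · rw [step, if_neg hd]
      exact (hs.2 (Bool.of_not_eq_true hd)).ge
  · simp [step, deviceVal]

theorem le_deviceVal_of_persisted {s : St} {v : ℕ} {t₁ t₂ t₃ : List Event} {e : Event}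
    (hs : Consistent s) (htr : AdmissibleRun s (t₁ ++ [Event.write v] ++ t₂ ++ [e] ++ t₃))
    (he : e = Event.sync ∨ e = Event.writeback) :
    v ≤ deviceVal (run s (t₁ ++ [Event.write v] ++ t₂ ++ [e] ++ t₃)) := by
  simp only [admissibleRun_append, run_append] at htr ⊢
  obtain ⟨⟨⟨⟨h₁, hw⟩, h₂⟩, hpersist⟩, h₃⟩ := htr
  set s₂ := run (run (run s t₁) [Event.write v]) t₂
  have hs₂ : Consistent s₂ := ((hs.run h₁).run hw).run h₂
  have hv : v ≤ s₂.cache := cache_le_cache_run h₂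
  calc v ≤ deviceVal (run s₂ [e]) := hv.trans (cache_le_deviceVal_step hs₂ he)
    _ ≤ _ := deviceVal_le_deviceVal_run (hs₂.run hpersist) h₃

/-- Invariant of every state reachable from an initially
    consistent state (cache = disk = nvm, dirty = false) by finite sequences
    of write / writeback / sync transitions, where each write installs a fresh
    strictly larger version:
    (1) if dirty = false then the device named by latest_dev holds exactly the
        current cache version; and
    (2) the device named by latest_dev holds a version ≥ every version that
        was both written and subsequently synced or written back. -/
theorem algorithm1_invariant (s₀ : St) (tr : List Event)
    (hinit : s₀.cache = s₀.disk ∧ s₀.cache = s₀.nvm ∧ s₀.dirty = false)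
    (hops : ∀ e ∈ tr, (∃ u, e = Event.write u) ∨ e = Event.sync ∨ e = Event.writeback)
    (hfresh : ∀ t₁ u t₂, tr = t₁ ++ [Event.write u] ++ t₂ → (run s₀ t₁).cache < u) :
    let s := run s₀ tr
    ((s.dirty = false → deviceVal s = s.cache) ∧
     ∀ v t₁ e t₂ t₃, tr = t₁ ++ [Event.write v] ++ t₂ ++ [e] ++ t₃ →
       (e = Event.sync ∨ e = Event.writeback) → v ≤ deviceVal s) := by
  obtain ⟨hdisk, hnvm, -⟩ := hinit
  have hs₀ : Consistent s₀ := by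
    cases hd : s₀.dev <;> simp [Consistent, deviceVal, hd, ← hdisk, ← hnvm]
  have htr : AdmissibleRun s₀ tr := admissibleRun_of_fresh hops hfresh
  refine ⟨(hs₀.run htr).2, ?_⟩
  rintro v t₁ e t₂ t₃ rfl he
  exact le_deviceVal_of_persisted hs₀ htr he
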